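/- For every x > 0, the Mills ratio of the standard normal distribution satisfies m(x) < (1 - x² + √(x⁴ + 6x² + 1))/(4x). -/

import Mathlib

open Real MeasureTheory Set

/-- The Mills ratio of the standard normal distribution:
`m x = e^{x²/2} ∫_x^∞ e^{-t²/2} dt`. -/
noncomputable def millsRatio (x : ℝ) : ℝ :=
  Real.exp (x ^ 2 / 2) * ∫ t in Set.Ioi x, Real.exp (-t ^ 2 / 2)

open Filter

noncomputable def mT (x : ℝ) : ℝ := ∫ t in Set.Ioi x, Real.exp (-t ^ 2 / 2)
noncomputable def mR (x : ℝ) : ℝ :=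
  (1 - x ^ 2 + Real.sqrt (x ^ 4 + 6 * x ^ 2 + 1)) / (4 * x)
noncomputable def mF (x : ℝ) : ℝ := mR x * Real.exp (-x ^ 2 / 2) - mT x

lemma f_integrable : Integrable (fun t : ℝ => Real.exp (-t ^ 2 / 2)) := by
  have h := integrable_exp_neg_mul_sq (b := (1/2 : ℝ)) (by norm_num)
  refine h.congr ?_
  filter_upwards with t
  congr 1
  ring

lemma f_cont : Continuous (fun t : ℝ => Real.exp (-t ^ 2 / 2)) := by
  continuity

lemma mT_eq (x : ℝ) (hx : 0 ≤ x) :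
    mT x = mT 0 - ∫ t in (0:ℝ)..x, Real.exp (-t ^ 2 / 2) := by
  rw [intervalIntegral.integral_of_le hx, eq_sub_iff_add_eq]
  unfold mT
  rw [add_comm, ← setIntegral_union (Ioc_disjoint_Ioi le_rfl) measurableSet_Ioi
    f_integrable.integrableOn f_integrable.integrableOn, Ioc_union_Ioi_eq_Ioi hx]

lemma hasDerivAt_mT (x : ℝ) (hx : 0 < x) :
    HasDerivAt mT (-(Real.exp (-x ^ 2 / 2))) x := by
  have h1 : HasDerivAt (fun y => ∫ t in (0:ℝ)..y, Real.exp (-t ^ 2 / 2))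
      (Real.exp (-x ^ 2 / 2)) x :=
    intervalIntegral.integral_hasDerivAt_right f_integrable.intervalIntegrable
      (f_cont.stronglyMeasurableAtFilter _ _) f_cont.continuousAt
  have h2 : HasDerivAt (fun y => mT 0 - ∫ t in (0:ℝ)..y, Real.exp (-t ^ 2 / 2))
      (-(Real.exp (-x ^ 2 / 2))) x := h1.const_sub _
  refine h2.congr_of_eventuallyEq ?_
  filter_upwards [eventually_gt_nhds hx] with y hy
  exact mT_eq y hy.le

lemma p_pos (x : ℝ) : 0 < x ^ 4 + 6 * x ^ 2 + 1 := by positivity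

lemma s_pos (x : ℝ) : 0 < Real.sqrt (x ^ 4 + 6 * x ^ 2 + 1) :=
  Real.sqrt_pos.mpr (p_pos x)

lemma s_sq (x : ℝ) :
    Real.sqrt (x ^ 4 + 6 * x ^ 2 + 1) ^ 2 = x ^ 4 + 6 * x ^ 2 + 1 :=
  Real.sq_sqrt (p_pos x).le

lemma hasDerivAt_mR (x : ℝ) (hx : 0 < x) :
    HasDerivAt mR
      (((-(2*x) + (4*x^3+12*x) * (1 / (2 * Real.sqrt (x ^ 4 + 6 * x ^ 2 + 1)))) * (4*x)
        - (1 - x ^ 2 + Real.sqrt (x ^ 4 + 6 * x ^ 2 + 1)) * 4) / (4*x) ^ 2) x := by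
  have hp : HasDerivAt (fun x : ℝ => x ^ 4 + 6 * x ^ 2 + 1) (4*x^3+12*x) x := by
    have := ((hasDerivAt_pow 4 x).add ((hasDerivAt_pow 2 x).const_mul 6)).add_const 1
    refine this.congr_deriv ?_
    push_cast
    ring
  have hs : HasDerivAt (fun x : ℝ => Real.sqrt (x ^ 4 + 6 * x ^ 2 + 1))
      ((4*x^3+12*x) * (1 / (2 * Real.sqrt (x ^ 4 + 6 * x ^ 2 + 1)))) x := by
    have := (Real.hasDerivAt_sqrt (p_pos x).ne').comp x hp
    refine this.congr_deriv ?_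
    ring
  have hN : HasDerivAt (fun x : ℝ => 1 - x ^ 2 + Real.sqrt (x ^ 4 + 6 * x ^ 2 + 1))
      (-(2*x) + (4*x^3+12*x) * (1 / (2 * Real.sqrt (x ^ 4 + 6 * x ^ 2 + 1)))) x := by
    have h2 : HasDerivAt (fun x : ℝ => 1 - x ^ 2) (-(2*x)) x := by
      have := (hasDerivAt_pow 2 x).const_sub 1
      refine this.congr_deriv ?_
      push_cast
      ring
    exact h2.add hs
  have hD : HasDerivAt (fun x : ℝ => 4 * x) 4 x := by
    simpa using (hasDerivAt_id x).const_mul 4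
  have := hN.div hD (by positivity)
  exact this

lemma key_num (x : ℝ) (hx : 0 < x) :
    Real.sqrt (x ^ 4 + 6 * x ^ 2 + 1) * (x^4 + 2*x^2 - 1)
      - (x^6 + 5*x^4 + x^2 + 1) < 0 := by
  set s := Real.sqrt (x ^ 4 + 6 * x ^ 2 + 1) with hs
  have hs0 := s_pos x
  have hs2 := s_sq x
  rw [← hs] at hs0 hs2
  have hC : (0:ℝ) < x^6 + 5*x^4 + x^2 + 1 := by positivity
  have hL2 : (s * (x^4+2*x^2-1))^2 = (x^6+5*x^4+x^2+1)^2 - 32*x^4 := by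
    linear_combination (x^4+2*x^2-1)^2 * hs2
  nlinarith [hC, hL2, pow_pos hx 4]

lemma key (x : ℝ) (hx : 0 < x) :
    ((-(2*x) + (4*x^3+12*x) * (1 / (2 * Real.sqrt (x ^ 4 + 6 * x ^ 2 + 1)))) * (4*x)
        - (1 - x ^ 2 + Real.sqrt (x ^ 4 + 6 * x ^ 2 + 1)) * 4) / (4*x) ^ 2
      - x * mR x + 1 < 0 := by
  set s := Real.sqrt (x ^ 4 + 6 * x ^ 2 + 1) with hs
  have hs0 := s_pos x
  have hs2 := s_sq x
  rw [← hs] at hs0 hs2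
  have hnum := key_num x hx
  rw [← hs] at hnum
  have heq : ((-(2*x) + (4*x^3+12*x) * (1 / (2 * s))) * (4*x) - (1 - x ^ 2 + s) * 4) / (4*x) ^ 2
      - x * mR x + 1
      = (s * (x^4 + 2*x^2 - 1) - (x^6 + 5*x^4 + x^2 + 1)) / (4 * x^2 * s) := by
    unfold mR
    rw [← hs]
    field_simp
    linear_combination (-2*(1+x^2)) * hs2
  rw [heq]
  exact div_neg_of_neg_of_pos hnum (by positivity)

lemma hasDerivAt_exp_neg (x : ℝ) :
    HasDerivAt (fun x : ℝ => Real.exp (-x ^ 2 / 2)) (-x * Real.exp (-x ^ 2 / 2)) x := by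
  have hg : HasDerivAt (fun x : ℝ => -x ^ 2 / 2) (-x) x := by
    have := ((hasDerivAt_pow 2 x).neg).div_const 2
    refine this.congr_deriv ?_
    push_cast
    ring
  have := (Real.hasDerivAt_exp (-x ^ 2 / 2)).comp x hg
  refine this.congr_deriv ?_
  ring

lemma hasDerivAt_mF (x : ℝ) (hx : 0 < x) :
    HasDerivAt mF
      (Real.exp (-x ^ 2 / 2) *
        ((((-(2*x) + (4*x^3+12*x) * (1 / (2 * Real.sqrt (x ^ 4 + 6 * x ^ 2 + 1)))) * (4*x)
          - (1 - x ^ 2 + Real.sqrt (x ^ 4 + 6 * x ^ 2 + 1)) * 4) / (4*x) ^ 2)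
          - x * mR x + 1)) x := by
  have h := ((hasDerivAt_mR x hx).mul (hasDerivAt_exp_neg x)).sub (hasDerivAt_mT x hx)
  refine h.congr_deriv ?_
  ring

lemma deriv_mF_neg (x : ℝ) (hx : 0 < x) : deriv mF x < 0 := by
  rw [(hasDerivAt_mF x hx).deriv]
  have := key x hx
  have he : 0 < Real.exp (-x ^ 2 / 2) := Real.exp_pos _
  nlinarith

lemma mR_nonneg (x : ℝ) (hx : 0 < x) : 0 ≤ mR x := by
  unfold mR
  apply div_nonneg _ (by positivity)
  have h : (x^2 - 1 : ℝ) ≤ Real.sqrt (x ^ 4 + 6 * x ^ 2 + 1) := by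
    rcases le_or_gt (x^2 - 1) 0 with h | h
    · exact h.trans (Real.sqrt_nonneg _)
    · rw [← Real.sqrt_sq h.le]
      apply Real.sqrt_le_sqrt
      nlinarith
  linarith

lemma mR_le (x : ℝ) (hx : 0 < x) : mR x ≤ x⁻¹ := by
  unfold mR
  rw [div_le_iff₀ (by positivity)]
  have h : Real.sqrt (x ^ 4 + 6 * x ^ 2 + 1) ≤ x^2 + 3 := by
    rw [← Real.sqrt_sq (by positivity : (0:ℝ) ≤ x^2 + 3)]
    apply Real.sqrt_le_sqrt
    nlinarith
  have : x⁻¹ * (4 * x) = 4 := by field_simp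
  rw [this]
  linarith

lemma mT_tendsto : Tendsto mT atTop (nhds 0) := by
  have h := intervalIntegral_tendsto_integral_Ioi 0
    (f_integrable.integrableOn (s := Set.Ioi 0)) tendsto_id
  have h2 : Tendsto (fun x => mT 0 - ∫ t in (0:ℝ)..x, Real.exp (-t ^ 2 / 2))
      atTop (nhds (mT 0 - mT 0)) := tendsto_const_nhds.sub h
  rw [sub_self] at h2
  refine h2.congr' ?_
  filter_upwards [eventually_ge_atTop (0:ℝ)] with y hy
  exact (mT_eq y hy).symm

lemma mRe_tendsto : Tendsto (fun x => mR x * Real.exp (-x ^ 2 / 2)) atTop (nhds 0) := by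
  have hbound : ∀ᶠ x in atTop, |mR x * Real.exp (-x ^ 2 / 2)| ≤ x⁻¹ := by
    filter_upwards [eventually_gt_atTop (0:ℝ)] with y hy
    rw [abs_of_nonneg (mul_nonneg (mR_nonneg y hy) (Real.exp_pos _).le)]
    calc mR y * Real.exp (-y ^ 2 / 2) ≤ y⁻¹ * 1 := by
          apply mul_le_mul (mR_le y hy) (Real.exp_le_one_iff.mpr (by nlinarith))
            (Real.exp_pos _).le (by positivity)
      _ = y⁻¹ := mul_one _
  exact squeeze_zero_norm' hbound tendsto_inv_atTop_zero

lemma mF_tendsto : Tendsto mF atTop (nhds 0) := by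
  have := mRe_tendsto.sub mT_tendsto
  rw [sub_self] at this
  exact this

lemma mF_antiOn (x : ℝ) (hx : 0 < x) : StrictAntiOn mF (Set.Ici x) := by
  apply strictAntiOn_of_deriv_neg (convex_Ici x)
  · intro t ht
    exact ((hasDerivAt_mF t (lt_of_lt_of_le hx ht)).differentiableAt).continuousAt.continuousWithinAt
  · intro t ht
    rw [interior_Ici] at ht
    exact deriv_mF_neg t (hx.trans ht)

lemma mF_nonneg (x : ℝ) (hx : 0 < x) : 0 ≤ mF x := by
  refine le_of_tendsto mF_tendsto ?_
  filter_upwards [eventually_ge_atTop (x+1)] with y hy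
  exact ((mF_antiOn x hx) Set.self_mem_Ici (by simp; linarith) (by linarith)).le

lemma mF_pos (x : ℝ) (hx : 0 < x) : 0 < mF x := by
  have h1 : mF (x+1) < mF x :=
    (mF_antiOn x hx) Set.self_mem_Ici (by simp) (by linarith)
  have h2 := mF_nonneg (x+1) (by linarith)
  linarith

theorem stmt_16 (x : ℝ) (hx : 0 < x) :
    millsRatio x < (1 - x ^ 2 + Real.sqrt (x ^ 4 + 6 * x ^ 2 + 1)) / (4 * x) := by
  have hF := mF_pos x hx
  unfold mF at hF
  have hT : mT x < mR x * Real.exp (-x ^ 2 / 2) := by linarith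
  have hmid : millsRatio x = Real.exp (x ^ 2 / 2) * mT x := rfl
  have hgoal : (1 - x ^ 2 + Real.sqrt (x ^ 4 + 6 * x ^ 2 + 1)) / (4 * x) = mR x := rfl
  rw [hmid, hgoal]
  have he : (0:ℝ) < Real.exp (x ^ 2 / 2) := Real.exp_pos _
  calc Real.exp (x ^ 2 / 2) * mT x
      < Real.exp (x ^ 2 / 2) * (mR x * Real.exp (-x ^ 2 / 2)) := by
        exact mul_lt_mul_of_pos_left hT he
    _ = mR x := by
        rw [← mul_assoc, mul_comm (Real.exp (x ^ 2 / 2)), mul_assoc,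
          ← Real.exp_add]
        ring_nf
        simp
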